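/- arXiv:2307.04734 — 2 statements merged into one kernel-verified Lean document; each statement's English description precedes it below -/
import Mathlib

section
/- Let p be a prime, α ≥ 1, N ≥ 1 an integer, and set β = min(α, ν_p(N)) where ν_p(N) is the p-adic valuation of N. Then for every pair (a, b) ∈ (Z/p^αZ)² with N·(b − a) ≡ 0 (mod p^α), there exists a unique integer j with α − β ≤ j ≤ α such that (a, b) lies in the orbit of (0, p^j mod p^α), i.e. such that there is a quandle automorphism f of Z_{p^α}^dih with f(0) = a and f(p^j) = b. -/
/-- A quandle endomorphism of the dihedral quandle `Z_n^dih`. -/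
def IsDihedralEnd (n : ℕ) (f : ZMod n → ZMod n) : Prop :=
  ∀ x y : ZMod n, f (2 * y - x) = 2 * f y - f x

/-- A quandle automorphism of the dihedral quandle `Z_n^dih`. -/
def IsDihedralAut (n : ℕ) (f : ZMod n → ZMod n) : Prop :=
  IsDihedralEnd n f ∧ Function.Bijective f

lemma end_affine {n : ℕ} [NeZero n] {f : ZMod n → ZMod n} (hf : IsDihedralEnd n f) :
    ∀ x : ZMod n, f x = f 0 + (f 1 - f 0) * x := by
  have key : ∀ k : ℕ, f (k : ZMod n) = f 0 + (f 1 - f 0) * (k : ZMod n) := by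
    intro k
    induction k using Nat.strong_induction_on with
    | _ k ih =>
      match k with
      | 0 => simp
      | 1 => simp
      | (m+2) =>
        have h := hf (m : ZMod n) ((m+1 : ℕ) : ZMod n)
        have e : (2 : ZMod n) * ((m+1:ℕ) : ZMod n) - (m : ZMod n) = ((m+2 : ℕ) : ZMod n) := by
          push_cast; ring
        rw [e] at h
        rw [h, ih m (by omega), ih (m+1) (by omega)]
        push_cast; ring
  intro x
  have := key x.val
  rwa [ZMod.natCast_zmod_val] at this

lemma orbit_iff {n : ℕ} [NeZero n] (a b t : ZMod n) :
    (∃ f, IsDihedralAut n f ∧ f 0 = a ∧ f t = b) ↔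
      ∃ c : ZMod n, IsUnit c ∧ c * t = b - a := by
  constructor
  · rintro ⟨f, ⟨hend, hbij⟩, h0, ht⟩
    refine ⟨f 1 - f 0, ?_, ?_⟩
    · have hmul : Function.Bijective (fun x : ZMod n => (f 1 - f 0) * x) := by
        have : (fun x : ZMod n => (f 1 - f 0) * x) = (fun y => y - f 0) ∘ f := by
          funext x
          rw [Function.comp_apply, end_affine hend x]
          ring
        rw [this]
        exact Function.Bijective.comp ⟨fun u v huv => by simpa using huv,
          fun y => ⟨y + f 0, by ring⟩⟩ hbij
      obtain ⟨d, hd⟩ := hmul.surjective 1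
      exact IsUnit.of_mul_eq_one d hd
    · have := end_affine hend t
      rw [ht, h0] at this
      rw [h0]
      linear_combination -this
  · rintro ⟨c, hc, hct⟩
    refine ⟨fun x => a + c * x, ⟨?_, ?_⟩, by simp, by show a + c * t = b; rw [hct]; ring⟩
    · intro x y; ring
    · constructor
      · intro x y hxy
        simp only [add_right_inj] at hxy
        exact hc.mul_left_cancel hxy
      · intro y
        obtain ⟨u, rfl⟩ := hc
        exact ⟨(u⁻¹ : (ZMod n)ˣ) * (y - a), by simp [← mul_assoc]⟩

theorem orbit_representatives_prime_power (p : ℕ) (hp : p.Prime) (α : ℕ) (hα : 1 ≤ α)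
    (N : ℕ) (hN : 1 ≤ N) (β : ℕ) (hβ : β = min α (padicValNat p N)) :
    ∀ a b : ZMod (p ^ α), (N : ZMod (p ^ α)) * (b - a) = 0 →
      ∃! j : ℕ, (α - β ≤ j ∧ j ≤ α) ∧
        ∃ f : ZMod (p ^ α) → ZMod (p ^ α), IsDihedralAut (p ^ α) f ∧
          f 0 = a ∧ f ((p : ZMod (p ^ α)) ^ j) = b := by
  haveI : Fact p.Prime := ⟨hp⟩
  haveI : NeZero (p ^ α) := ⟨pow_ne_zero _ hp.pos.ne'⟩
  intro a b hNab
  set x : ZMod (p ^ α) := b - a with hx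
  -- characterize membership via units
  have hchar : ∀ j : ℕ,
      (∃ f, IsDihedralAut (p ^ α) f ∧ f 0 = a ∧ f ((p : ZMod (p ^ α)) ^ j) = b) ↔
      ∃ c : ZMod (p ^ α), IsUnit c ∧ c * (p : ZMod (p ^ α)) ^ j = x := by
    intro j; exact orbit_iff a b _
  have hppow : ((p : ZMod (p ^ α)) ^ α) = 0 := by
    have : ((p ^ α : ℕ) : ZMod (p ^ α)) = 0 := ZMod.natCast_self _
    push_cast at this
    exact this
  -- the canonical j
  set j₀ : ℕ := if x = 0 then α else padicValNat p x.val with hj₀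
  -- any valid j equals j₀
  have huniq : ∀ j : ℕ, j ≤ α →
      (∃ c : ZMod (p ^ α), IsUnit c ∧ c * (p : ZMod (p ^ α)) ^ j = x) → j = j₀ := by
    rintro j hjα ⟨c, hc, hcx⟩
    have hcv : ¬ p ∣ c.val := by
      have h1 : IsUnit ((c.val : ℕ) : ZMod (p ^ α)) := by rwa [ZMod.natCast_zmod_val]
      have h2 : Nat.Coprime c.val (p ^ α) := (ZMod.isUnit_iff_coprime _ _).mp h1
      have h3 : Nat.Coprime c.val p := (Nat.coprime_pow_right_iff hα c.val p).mp h2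
      exact hp.coprime_iff_not_dvd.mp h3.symm
    by_cases hx0 : x = 0
    · -- j = α
      rw [hj₀, if_pos hx0]
      rw [hx0] at hcx
      have : ((c.val * p ^ j : ℕ) : ZMod (p ^ α)) = 0 := by
        push_cast
        rw [ZMod.natCast_zmod_val]
        exact hcx
      have hdvd : p ^ α ∣ c.val * p ^ j := (ZMod.natCast_eq_zero_iff _ _).mp this
      have hjge : α ≤ j := by
        by_contra hlt
        push_neg at hlt
        have h1 : p ^ α ∣ p ^ j * c.val := by rwa [mul_comm] at hdvd
        have h2 : p ^ j * p ∣ p ^ j * c.val :=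
          dvd_trans (by rw [← pow_succ]; exact pow_dvd_pow p (by omega)) h1
        exact hcv ((mul_dvd_mul_iff_left (pow_ne_zero j hp.pos.ne')).mp h2)
      omega
    · -- j = padicValNat p x.val
      rw [hj₀, if_neg hx0]
      have hxval : x.val ≠ 0 := fun h => hx0 (by rw [← ZMod.natCast_zmod_val x, h]; simp)
      have hjlt : j < α := by
        rcases Nat.lt_or_ge j α with h | h
        · exact h
        · exfalso
          have : j = α := le_antisymm hjα h
          rw [this, hppow, mul_zero] at hcx
          exact hx0 hcx.symm
      have hmod : (c.val * p ^ j) ≡ x.val [MOD p ^ α] := by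
        rw [← ZMod.natCast_eq_natCast_iff]
        push_cast
        rw [ZMod.natCast_zmod_val, ZMod.natCast_zmod_val]
        exact hcx
      have hdint : ((p : ℤ) ^ α) ∣ ((x.val : ℤ) - (c.val * p ^ j : ℕ)) := by
        have h := hmod.dvd
        push_cast at h ⊢
        exact h
      have hdvd1 : p ^ j ∣ x.val := by
        have h1 : ((p : ℤ) ^ j) ∣ ((x.val : ℤ)) := by
          have h2 : ((p : ℤ) ^ j) ∣ ((x.val : ℤ) - (c.val * p ^ j : ℕ)) :=
            dvd_trans (pow_dvd_pow _ hjα) hdint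
          have h3 : ((p : ℤ) ^ j) ∣ ((c.val * p ^ j : ℕ) : ℤ) := by
            push_cast
            exact dvd_mul_left _ _
          have := dvd_add h2 h3
          simpa using this
        exact_mod_cast h1
      have hndvd : ¬ p ^ (j + 1) ∣ x.val := by
        intro hbad
        have h1 : ((p : ℤ) ^ (j+1)) ∣ ((c.val * p ^ j : ℕ) : ℤ) := by
          have h2 : ((p : ℤ) ^ (j+1)) ∣ ((x.val : ℤ) - (c.val * p ^ j : ℕ)) :=
            dvd_trans (pow_dvd_pow _ (by omega)) hdint
          have h3 : ((p : ℤ) ^ (j+1)) ∣ (x.val : ℤ) := by exact_mod_cast hbad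
          have := dvd_sub h3 h2
          simpa using this
        have h4 : p ^ (j+1) ∣ c.val * p ^ j := by exact_mod_cast h1
        have h5 : p ^ j * p ∣ p ^ j * c.val := by
          rw [← pow_succ]
          exact h4.trans (by rw [mul_comm])
        have h6 : p ∣ c.val := (mul_dvd_mul_iff_left (pow_ne_zero j hp.pos.ne')).mp h5
        exact hcv h6
      have hle1 : j ≤ padicValNat p x.val := (padicValNat_dvd_iff_le hxval).mp hdvd1
      have hle2 : padicValNat p x.val ≤ j := by
        by_contra hlt
        exact hndvd ((padicValNat_dvd_iff_le hxval).mpr (by omega))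
      omega
  -- existence for j₀
  have hrange : α - β ≤ j₀ ∧ j₀ ≤ α := by
    by_cases hx0 : x = 0
    · rw [hj₀, if_pos hx0]; omega
    · rw [hj₀, if_neg hx0]
      have hxval : x.val ≠ 0 := fun h => hx0 (by rw [← ZMod.natCast_zmod_val x, h]; simp)
      set v := padicValNat p x.val with hv
      have hNx : p ^ α ∣ N * x.val := by
        have : ((N * x.val : ℕ) : ZMod (p ^ α)) = 0 := by
          push_cast
          rw [ZMod.natCast_zmod_val]
          exact hNab
        exact (ZMod.natCast_eq_zero_iff _ _).mp this
      have hval : α ≤ padicValNat p N + v := by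
        have hN0 : N ≠ 0 := by omega
        rcases (padicValNat_dvd_iff _ _).mp hNx with h | h
        · exact absurd h (Nat.mul_ne_zero (by omega) hxval)
        · rwa [padicValNat.mul hN0 hxval] at h
      constructor
      · omega
      · -- v ≤ α since p^v ∣ x.val and x.val < p^α
        have h1 : p ^ v ∣ x.val := pow_padicValNat_dvd
        have h2 : p ^ v ≤ x.val := Nat.le_of_dvd (Nat.pos_of_ne_zero hxval) h1
        have h3 : x.val < p ^ α := ZMod.val_lt x
        have := Nat.pow_lt_pow_iff_right hp.one_lt (n := v) (m := α)
        omega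
  have hexist : ∃ c : ZMod (p ^ α), IsUnit c ∧ c * (p : ZMod (p ^ α)) ^ j₀ = x := by
    by_cases hx0 : x = 0
    · refine ⟨1, isUnit_one, ?_⟩
      rw [hj₀, if_pos hx0, hppow, hx0, mul_zero]
    · rw [hj₀, if_neg hx0]
      have hxval : x.val ≠ 0 := fun h => hx0 (by rw [← ZMod.natCast_zmod_val x, h]; simp)
      set v := padicValNat p x.val with hv
      have h1 : p ^ v ∣ x.val := pow_padicValNat_dvd
      set m := x.val / p ^ v with hm
      have hmv : m * p ^ v = x.val := Nat.div_mul_cancel h1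
      have hpm : ¬ p ∣ m := by
        intro hd
        have hdd : p ^ (v + 1) ∣ x.val := by
          rw [← hmv, pow_succ, mul_comm (p ^ v) p]
          exact mul_dvd_mul hd dvd_rfl
        exact pow_succ_padicValNat_not_dvd hxval hdd
      refine ⟨(m : ZMod (p ^ α)), ?_, ?_⟩
      · rw [ZMod.isUnit_iff_coprime]
        exact Nat.Coprime.pow_right _ ((hp.coprime_iff_not_dvd.mpr hpm).symm)
      · have : ((m * p ^ v : ℕ) : ZMod (p ^ α)) = x := by
          rw [hmv, ZMod.natCast_zmod_val]
        push_cast at this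
        exact this
  refine ⟨j₀, ⟨hrange, (hchar j₀).mpr hexist⟩, ?_⟩
  rintro j ⟨⟨hj1, hj2⟩, hf⟩
  exact huniq j hj2 ((hchar j).mp hf)
end

section
/- Let p be a prime, α ≥ 1, and let j, j' be integers with 0 ≤ j ≤ α and 0 ≤ j' ≤ α. The number of quandle endomorphisms f of the dihedral quandle Z_{p^α}^dih with f(0) = 0 and f(p^j mod p^α) = p^{j'} mod p^α equals p^j if j ≤ j', and equals 0 if j > j'. -/
namespace IsDihedralEnd

variable {n : ℕ} {f : ZMod n → ZMod n}

theorem map_neg (h : IsDihedralEnd n f) (h0 : f 0 = 0) (x : ZMod n) : f (-x) = -f x := by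
  simpa [h0] using h x 0

theorem map_natCast (h : IsDihedralEnd n f) (h0 : f 0 = 0) (k : ℕ) : f k = f 1 * k := by
  induction k using Nat.twoStepInduction with
  | zero => simpa using h0
  | one => simp
  | more k ih ih' =>
    have step : f ((k + 2 : ℕ) : ZMod n) = 2 * f ((k + 1 : ℕ) : ZMod n) - f k := by
      rw [← h]; push_cast; ring_nf
    rw [step, ih, ih']
    push_cast; ring

theorem eq_map_one_mul (h : IsDihedralEnd n f) (h0 : f 0 = 0) (x : ZMod n) : f x = f 1 * x := by
  obtain ⟨k, rfl⟩ := ZMod.intCast_surjective x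
  obtain ⟨k, rfl | rfl⟩ := Int.eq_nat_or_neg k
  · simpa using h.map_natCast h0 k
  · simpa [h.map_neg h0] using h.map_natCast h0 k

end IsDihedralEnd

theorem isDihedralEnd_mul_left (n : ℕ) (c : ZMod n) : IsDihedralEnd n (c * ·) :=
  fun x y => by ring

def dihedralEndFixingZeroEquiv (n : ℕ) (a b : ZMod n) :
    {f : ZMod n → ZMod n // IsDihedralEnd n f ∧ f 0 = 0 ∧ f a = b} ≃ {c : ZMod n // c * a = b} where
  toFun f := ⟨f.1 1, by rw [← f.2.1.eq_map_one_mul f.2.2.1, f.2.2.2]⟩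
  invFun c := ⟨(c.1 * ·), isDihedralEnd_mul_left n c.1, mul_zero _, c.2⟩
  left_inv f := Subtype.ext <| funext fun x => (f.2.1.eq_map_one_mul f.2.2.1 x).symm
  right_inv c := Subtype.ext <| mul_one _

namespace ZMod

theorem card_mul_natCast_eq_of_mul_natCast_eq {n : ℕ} [NeZero n] (d : ℕ) {b c₀ : ZMod n}
    (hc₀ : c₀ * d = b) : Nat.card {c : ZMod n // c * d = b} = n.gcd d := by
  have hmem : ∀ c : ZMod n, c * d = b ↔ c - c₀ ∈ (nsmulAddMonoidHom d).ker := by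
    intro c
    rw [AddMonoidHom.mem_ker, nsmulAddMonoidHom_apply, nsmul_eq_mul, ← hc₀, mul_sub,
      sub_eq_zero, mul_comm (d : ZMod n) c, mul_comm (d : ZMod n) c₀]
  let e : {c : ZMod n // c * d = b} ≃ (nsmulAddMonoidHom d : ZMod n →+ ZMod n).ker :=
    { toFun := fun c => ⟨c - c₀, (hmem c).1 c.2⟩
      invFun := fun x => ⟨x + c₀, (hmem _).2 (by rw [add_sub_cancel_right]; exact x.2)⟩
      left_inv := fun c => Subtype.ext (sub_add_cancel _ _)
      right_inv := fun x => Subtype.ext (add_sub_cancel_right _ _) }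
  rw [Nat.card_congr e, IsAddCyclic.card_nsmulAddMonoidHom_ker, Nat.card_zmod]

theorem dvd_of_mul_natCast_eq {m n d b : ℕ} (hmn : m ∣ n) (hmd : m ∣ d) {c : ZMod n}
    (h : c * d = b) : m ∣ b := by
  have h' := congrArg (ZMod.castHom hmn (ZMod m)) h
  rw [map_mul, map_natCast, map_natCast, (ZMod.natCast_eq_zero_iff d m).2 hmd, mul_zero,
    eq_comm, ZMod.natCast_eq_zero_iff] at h'
  exact h'

end ZMod

theorem card_end_between_prime_power_reps_general (p : ℕ) (hp : p.Prime) (α : ℕ)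
    (j j' : ℕ) (hj : j ≤ α) :
    Nat.card {f : ZMod (p ^ α) → ZMod (p ^ α) // IsDihedralEnd (p ^ α) f ∧
        f 0 = 0 ∧ f ((p : ZMod (p ^ α)) ^ j) = (p : ZMod (p ^ α)) ^ j'} =
      if j ≤ j' then p ^ j else 0 := by
  have : NeZero (p ^ α) := ⟨pow_ne_zero _ hp.ne_zero⟩
  rw [Nat.card_congr (dihedralEndFixingZeroEquiv _ _ _), ← Nat.cast_pow, ← Nat.cast_pow]
  split_ifs with hjj'
  · have hsol : ((p ^ (j' - j) : ℕ) : ZMod (p ^ α)) * (p ^ j : ℕ) = (p ^ j' : ℕ) := by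
      rw [← Nat.cast_mul, ← pow_add, Nat.sub_add_cancel hjj']
    rw [ZMod.card_mul_natCast_eq_of_mul_natCast_eq _ hsol,
      Nat.gcd_eq_right (pow_dvd_pow p hj)]
  · refine Nat.card_eq_zero.2 (Or.inl ⟨fun ⟨c, hc⟩ => hjj' ?_⟩)
    exact (Nat.pow_dvd_pow_iff_le_right hp.one_lt).1
      (ZMod.dvd_of_mul_natCast_eq (pow_dvd_pow p hj) dvd_rfl hc)

theorem card_end_between_prime_power_reps (p : ℕ) (hp : p.Prime) (α : ℕ) (hα : 1 ≤ α)
    (j j' : ℕ) (hj : j ≤ α) (hj' : j' ≤ α) :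
    Nat.card {f : ZMod (p ^ α) → ZMod (p ^ α) // IsDihedralEnd (p ^ α) f ∧
        f 0 = 0 ∧ f ((p : ZMod (p ^ α)) ^ j) = (p : ZMod (p ^ α)) ^ j'} =
      if j ≤ j' then p ^ j else 0 :=
  card_end_between_prime_power_reps_general p hp α j j' hj
end
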